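/- Let p₁ and p₂ be the joint distributions of N adaptive rank-one POVM outcomes when the underlying state is the maximally mixed state I/2^n, respectively ρ_a = (I + P_a)/2^n for a uniformly random non-identity Pauli P_a. Then the total variation distance satisfies TV(p₁, p₂) ≤ 2N/(2^n + 1)^{1/3}. -/

import Mathlib

/-!
Write `p₂ = (4ⁿ - 1)⁻¹ Σₐ qₐ` with `qₐ(o) = p₁(o) ∏ᵢ (1 + rₐᵢ(o))`, `rₐᵢ = Re ⟨ψᵢ|Pₐ|ψᵢ⟩`.
Since the POVM elements sum to the identity and `Pₐ` is traceless, every `qₐ` is again a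
probability distribution, so `TV(p₁, p₂) = Σₒ (p₁ - p₂)⁺`. Pointwise `1 - ∏ᵢ (1 + rₐᵢ) ≤ Nε`
(Bernoulli) unless some `|rₐᵢ| > ε`, and it is at most `1` in any case. As
`Σₐ |⟨ψ|Pₐ|ψ⟩|² = 2ⁿ`, Chebyshev bounds the number of non-identity `Pₐ` with `|⟨ψ|Pₐ|ψ⟩| > ε` by
`(2ⁿ - 1) / ε² = (4ⁿ - 1) ε` for `ε = (2ⁿ + 1)^{-1/3}`. Hence `p₁ - p₂ ≤ 2Nε p₁` pointwise.
-/

open Matrix BigOperators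

/-- The single-qubit Pauli matrices `I, X, Y, Z`. -/
noncomputable def pauliM : Fin 4 → Matrix (Fin 2) (Fin 2) ℂ
  | 0 => 1
  | 1 => !![0, 1; 1, 0]
  | 2 => !![0, -Complex.I; Complex.I, 0]
  | 3 => !![1, 0; 0, -1]

/-- The `n`-qubit Pauli operator `P_a = σ_{a 1} ⊗ ⋯ ⊗ σ_{a n}`. -/
noncomputable def nPauli {n : ℕ} (a : Fin n → Fin 4) :
    Matrix (Fin n → Fin 2) (Fin n → Fin 2) ℂ :=
  fun x y => ∏ i, pauliM (a i) (x i) (y i)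

/-- The expectation value `⟨ψ|M|ψ⟩`. -/
noncomputable def expval {d : Type*} [Fintype d] (ψ : d → ℂ) (M : Matrix d d ℂ) : ℂ :=
  ∑ x, ∑ y, (starRingEnd ℂ) (ψ x) * M x y * ψ y

open Finset

section piKron

variable {ι R : Type*} [Fintype ι] [CommSemiring R] {m : ι → Type*}

def piKron (A : ∀ i, Matrix (m i) (m i) R) : Matrix (∀ i, m i) (∀ i, m i) R :=
  fun x y => ∏ i, A i (x i) (y i)

lemma conjTranspose_piKron [StarRing R] (A : ∀ i, Matrix (m i) (m i) R) :
    (piKron A)ᴴ = piKron fun i => (A i)ᴴ := by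
  ext x y
  simp [piKron, star_prod]

lemma piKron_one [∀ i, DecidableEq (m i)] :
    piKron (fun i => (1 : Matrix (m i) (m i) R)) = 1 := by
  ext x y
  simp [piKron, one_apply, prod_boole, funext_iff]

variable [DecidableEq ι] [∀ i, Fintype (m i)]

lemma piKron_mul (A B : ∀ i, Matrix (m i) (m i) R) :
    piKron A * piKron B = piKron fun i => A i * B i := by
  ext x y
  simp only [piKron, mul_apply, Fintype.prod_sum, ← prod_mul_distrib]

lemma trace_piKron (A : ∀ i, Matrix (m i) (m i) R) : (piKron A).trace = ∏ i, (A i).trace := by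
  simp only [trace, Matrix.diag, piKron, Fintype.prod_sum]

end piKron

lemma nPauli_eq_piKron {n : ℕ} (a : Fin n → Fin 4) : nPauli a = piKron fun i => pauliM (a i) := rfl

lemma conjTranspose_pauliM_mul_self (m : Fin 4) : (pauliM m)ᴴ * pauliM m = 1 := by
  fin_cases m <;> ext x y <;> fin_cases x <;> fin_cases y <;>
    simp [pauliM, mul_apply, Fin.sum_univ_two]

lemma trace_pauliM {m : Fin 4} (hm : m ≠ 0) : (pauliM m).trace = 0 := by
  fin_cases m <;> simp [pauliM, trace, Fin.sum_univ_two] at hm ⊢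

lemma sum_pauliM_mul_star (x y x' y' : Fin 2) :
    ∑ m, pauliM m x y * star (pauliM m x' y') = if x = x' ∧ y = y' then 2 else 0 := by
  fin_cases x <;> fin_cases y <;> fin_cases x' <;> fin_cases y' <;>
    simp [pauliM, Fin.sum_univ_four] <;> norm_num

lemma conjTranspose_nPauli_mul_self {n : ℕ} (a : Fin n → Fin 4) :
    (nPauli a)ᴴ * nPauli a = 1 := by
  simp only [nPauli_eq_piKron, conjTranspose_piKron, piKron_mul, conjTranspose_pauliM_mul_self,
    piKron_one]

lemma nPauli_zero (n : ℕ) : nPauli (fun _ : Fin n => 0) = 1 := by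
  simp only [nPauli_eq_piKron, pauliM, piKron_one]

lemma trace_nPauli {n : ℕ} {a : Fin n → Fin 4} (ha : a ≠ fun _ => 0) : (nPauli a).trace = 0 := by
  obtain ⟨i, hi⟩ := Function.ne_iff.mp ha
  rw [nPauli_eq_piKron, trace_piKron]
  exact prod_eq_zero (mem_univ i) (trace_pauliM hi)

lemma sum_nPauli_mul_star {n : ℕ} (p q : (Fin n → Fin 2) × (Fin n → Fin 2)) :
    ∑ a, nPauli a p.1 p.2 * star (nPauli a q.1 q.2) = if p = q then 2 ^ n else 0 := by
  simp only [nPauli, star_prod, ← prod_mul_distrib]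
  rw [← Fintype.prod_sum fun i m => pauliM m (p.1 i) (p.2 i) * star (pauliM m (q.1 i) (q.2 i))]
  simp only [sum_pauliM_mul_star, prod_ite_zero, mem_univ, forall_const, prod_const, card_univ,
    Fintype.card_fin, Prod.ext_iff, funext_iff, forall_and]

lemma expval_eq_dotProduct {d : Type*} [Fintype d] (ψ : d → ℂ) (M : Matrix d d ℂ) :
    expval ψ M = (M *ᵥ ψ) ⬝ᵥ star ψ := by
  simp only [expval, dotProduct, mulVec, sum_mul, Pi.star_apply, starRingEnd_apply]
  exact sum_congr rfl fun x _ => sum_congr rfl fun y _ => by ring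

lemma norm_expval_le_one {d : Type*} [Fintype d] [DecidableEq d] {ψ : d → ℂ}
    (hψ : ∑ x, ‖ψ x‖ ^ 2 = 1) {U : Matrix d d ℂ} (hU : Uᴴ * U = 1) : ‖expval ψ U‖ ≤ 1 := by
  have hunit : toEuclideanCLM (𝕜 := ℂ) U ∈ unitary _ :=
    Unitary.map_mem _ ((mem_unitaryGroup_iff' (A := U)).mpr hU)
  have hnorm : ‖WithLp.toLp 2 ψ‖ = 1 := by
    simp [EuclideanSpace.norm_eq, hψ]
  have := norm_inner_le_norm (𝕜 := ℂ) (WithLp.toLp 2 ψ)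
    (toEuclideanCLM (𝕜 := ℂ) U (WithLp.toLp 2 ψ))
  rwa [ContinuousLinearMap.norm_map_of_mem_unitary hunit, hnorm, toEuclideanCLM_toLp,
    EuclideanSpace.inner_toLp_toLp, ← expval_eq_dotProduct, one_mul] at this

lemma expval_one {d : Type*} [Fintype d] [DecidableEq d] {ψ : d → ℂ} (hψ : ∑ x, ‖ψ x‖ ^ 2 = 1) :
    expval ψ 1 = 1 := by
  simp only [expval, one_apply, mul_ite, ite_mul, mul_one, mul_zero, zero_mul, sum_ite_eq,
    mem_univ, if_true, Complex.conj_mul']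
  exact_mod_cast hψ

lemma expval_eq_trace_mul_vecMulVec {d : Type*} [Fintype d] (ψ : d → ℂ) (M : Matrix d d ℂ) :
    expval ψ M = (M * vecMulVec ψ fun x => starRingEnd ℂ (ψ x)).trace := by
  simp only [expval, trace, Matrix.diag, mul_apply, vecMulVec_apply]
  exact sum_congr rfl fun x _ => sum_congr rfl fun y _ => by ring

lemma sum_mul_expval_eq_trace {d ι : Type*} [Fintype d] [DecidableEq d] [Fintype ι]
    {c : ι → ℂ} {ψ : ι → d → ℂ}
    (h : ∑ j, c j • vecMulVec (ψ j) (fun x => starRingEnd ℂ (ψ j x)) = 1) (M : Matrix d d ℂ) :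
    ∑ j, c j * expval (ψ j) M = M.trace := by
  calc ∑ j, c j * expval (ψ j) M
      = (M * ∑ j, c j • vecMulVec (ψ j) (fun x => starRingEnd ℂ (ψ j x))).trace := by
        simp only [expval_eq_trace_mul_vecMulVec, Matrix.mul_sum, Matrix.mul_smul, trace_sum,
          trace_smul, smul_eq_mul]
    _ = M.trace := by rw [h, Matrix.mul_one]

lemma sum_mul_star_sum_of_orthogonal {α κ : Type*} [Fintype α] [Fintype κ] [DecidableEq κ]
    (v : α → κ → ℂ) {C : ℂ} (hv : ∀ p q, ∑ a, v a p * star (v a q) = if p = q then C else 0)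
    (c : κ → ℂ) :
    ∑ a, (∑ p, c p * v a p) * star (∑ q, c q * v a q) = C * ∑ p, c p * star (c p) := by
  calc _ = ∑ a, ∑ p, ∑ q, c p * star (c q) * (v a p * star (v a q)) := by
        simp only [star_sum, star_mul', sum_mul_sum]
        exact sum_congr rfl fun a _ => sum_congr rfl fun p _ => sum_congr rfl fun q _ => by ring
    _ = ∑ p, ∑ q, c p * star (c q) * ∑ a, v a p * star (v a q) := by
        simp only [mul_sum]
        rw [sum_comm]
        exact sum_congr rfl fun p _ => sum_comm
    _ = C * ∑ p, c p * star (c p) := by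
        simp only [hv, mul_ite, mul_zero, sum_ite_eq, mem_univ, if_true, mul_sum]
        exact sum_congr rfl fun p _ => by ring

lemma sum_norm_sq_expval_nPauli {n : ℕ} {ψ : (Fin n → Fin 2) → ℂ} (hψ : ∑ x, ‖ψ x‖ ^ 2 = 1) :
    ∑ a, ‖expval ψ (nPauli a)‖ ^ 2 = 2 ^ n := by
  have hexp : ∀ a, expval ψ (nPauli a) =
      ∑ p : (Fin n → Fin 2) × (Fin n → Fin 2), star (ψ p.1) * ψ p.2 * nPauli a p.1 p.2 := by
    intro a
    simp only [expval, Fintype.sum_prod_type, Complex.star_def]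
    exact sum_congr rfl fun _ _ => sum_congr rfl fun _ _ => by ring
  have key := sum_mul_star_sum_of_orthogonal (C := (2 : ℂ) ^ n)
    (fun a (p : (Fin n → Fin 2) × (Fin n → Fin 2)) => nPauli a p.1 p.2) sum_nPauli_mul_star
    fun p => star (ψ p.1) * ψ p.2
  have hψψ : ∑ x, ∑ y, (‖ψ x‖ * ‖ψ y‖) ^ 2 = 1 := by
    simp only [mul_pow, ← sum_mul_sum, hψ, one_mul]
  simp only [← hexp] at key
  simp only [Complex.star_def, Complex.mul_conj', norm_mul, Complex.norm_conj,
    Fintype.sum_prod_type] at key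
  norm_cast at key
  rw [hψψ, mul_one] at key
  exact_mod_cast key

lemma sum_ne_zero_norm_sq_expval_nPauli {n : ℕ} {ψ : (Fin n → Fin 2) → ℂ}
    (hψ : ∑ x, ‖ψ x‖ ^ 2 = 1) :
    ∑ a ∈ ({a | a ≠ fun _ => 0} : Finset (Fin n → Fin 4)), ‖expval ψ (nPauli a)‖ ^ 2 =
      2 ^ n - 1 := by
  rw [filter_ne', sum_erase_eq_sub (mem_univ _), sum_norm_sq_expval_nPauli hψ, nPauli_zero,
    expval_one hψ, norm_one, one_pow]

lemma card_filter_ne_zero_paulis (n : ℕ) :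
    (#({a | a ≠ fun _ => 0} : Finset (Fin n → Fin 4)) : ℝ) = 4 ^ n - 1 := by
  rw [filter_ne', card_erase_of_mem (mem_univ _), card_univ, Fintype.card_fun, Fintype.card_fin,
    Fintype.card_fin, Nat.cast_sub (Nat.one_le_pow _ _ (by norm_num))]
  norm_num

lemma card_filter_lt_abs_re_expval_le {n : ℕ} {ψ : (Fin n → Fin 2) → ℂ}
    (hψ : ∑ x, ‖ψ x‖ ^ 2 = 1) {ε : ℝ} (hε : 0 < ε) (hε3 : ε ^ 3 * (2 ^ n + 1) = 1) :
    (#{a ∈ ({a | a ≠ fun _ => 0} : Finset (Fin n → Fin 4)) |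
      ε < |(expval ψ (nPauli a)).re|} : ℝ) ≤ (4 ^ n - 1) * ε := by
  have hmarkov : (#{a ∈ ({a | a ≠ fun _ => 0} : Finset (Fin n → Fin 4)) |
      ε < |(expval ψ (nPauli a)).re|} : ℝ) * ε ^ 2 ≤ 2 ^ n - 1 := by
    rw [← sum_ne_zero_norm_sq_expval_nPauli hψ, ← nsmul_eq_mul]
    refine (card_nsmul_le_sum _ _ _ fun a ha => ?_).trans
      (sum_le_sum_of_subset_of_nonneg (filter_subset _ _) fun _ _ _ => by positivity)
    exact pow_le_pow_left₀ hε.le ((mem_filter.mp ha).2.le.trans (Complex.abs_re_le_norm _)) 2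
  have hcube : (2 : ℝ) ^ n - 1 = (4 ^ n - 1) * ε * ε ^ 2 := by
    rw [show (4 : ℝ) ^ n = 2 ^ n * 2 ^ n by rw [← mul_pow]; norm_num]
    linear_combination (1 - 2 ^ n) * hε3
  exact le_of_mul_le_mul_right (hmarkov.trans hcube.le) (by positivity)

lemma neg_one_le_re_expval_nPauli {n : ℕ} {ψ : (Fin n → Fin 2) → ℂ} (hψ : ∑ x, ‖ψ x‖ ^ 2 = 1)
    (a : Fin n → Fin 4) : -1 ≤ (expval ψ (nPauli a)).re :=
  (abs_le.mp ((Complex.abs_re_le_norm _).trans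
    (norm_expval_le_one hψ (conjTranspose_nPauli_mul_self a)))).1

lemma sum_mul_re_expval_nPauli_eq_zero {n : ℕ} {ι : Type*} [Fintype ι] {w : ι → ℝ}
    {ψ : ι → (Fin n → Fin 2) → ℂ}
    (h : ∑ j, ((w j : ℂ) * 2 ^ n) • vecMulVec (ψ j) (fun x => starRingEnd ℂ (ψ j x)) = 1)
    {a : Fin n → Fin 4} (ha : a ≠ fun _ => 0) :
    ∑ j, w j * (expval (ψ j) (nPauli a)).re = 0 := by
  have key : ∑ j, ((w j * 2 ^ n : ℝ) : ℂ) * expval (ψ j) (nPauli a) = 0 := by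
    push_cast
    rw [sum_mul_expval_eq_trace h, trace_nPauli ha]
  have := congrArg Complex.re key
  simp only [Complex.re_sum, Complex.re_ofReal_mul, Complex.zero_re, mul_right_comm _ ((2 : ℝ) ^ n),
    ← sum_mul] at this
  exact (mul_eq_zero.mp this).resolve_right (by positivity)

lemma sum_prod_eq_one_of_adapted {O : Type*} [Fintype O] :
    ∀ {N : ℕ} (g : Fin N → (Fin N → O) → O → ℝ), Nonempty (Fin N → O) →
      (∀ i o, ∑ j, g i o j = 1) →
      (∀ i o o', (∀ j, j < i → o j = o' j) → g i o = g i o') →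
      ∑ o : Fin N → O, ∏ i, g i o (o i) = 1
  | 0, _, _, _, _ => by simp
  | N + 1, g, ⟨o₀⟩, hrow, hadapt => by
    have hfirst : ∀ o, g 0 o = g 0 o₀ := fun o =>
      hadapt 0 o o₀ fun j hj => absurd hj (Fin.not_lt_zero j)
    have htail : ∀ x, ∑ r : Fin N → O, ∏ i : Fin N, g i.succ (Fin.cons x r) (r i) = 1 := by
      intro x
      refine sum_prod_eq_one_of_adapted (fun i r => g i.succ (Fin.cons x r)) ⟨Fin.tail o₀⟩
        (fun i r => hrow _ _) fun i r r' h => hadapt _ _ _ fun j hj => ?_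
      induction j using Fin.cases with
      | zero => rfl
      | succ k => exact h k (Fin.succ_lt_succ_iff.mp hj)
    rw [Fintype.sum_equiv (Fin.consEquiv fun _ => O).symm _
      (fun p => ∏ i, g i (Fin.cons p.1 p.2) ((Fin.cons p.1 p.2 : Fin (N + 1) → O) i))
        fun o => by simp,
      Fintype.sum_prod_type]
    simp only [Fin.prod_univ_succ, Fin.cons_zero, Fin.cons_succ, hfirst, ← mul_sum, htail,
      mul_one]
    exact hrow 0 o₀

lemma half_mul_sum_abs_eq_sum_posPart {α : Type*} [Fintype α] {f : α → ℝ} (h : ∑ x, f x = 0) :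
    (1 / 2 : ℝ) * ∑ x, |f x| = ∑ x, (f x)⁺ := by
  have := sum_congr rfl fun x (_ : x ∈ univ) => abs_add_eq_two_nsmul_posPart (f x)
  rw [sum_add_distrib, h, add_zero, ← smul_sum, two_nsmul] at this
  linarith

lemma one_sub_prod_one_add_le {ι : Type*} [Fintype ι] {r : ι → ℝ} {ε : ℝ} (hr : ∀ i, -1 ≤ r i)
    (hε₀ : 0 ≤ ε) (hε₁ : ε ≤ 1) :
    1 - ∏ i, (1 + r i) ≤ Fintype.card ι * ε + ∑ i, if ε < |r i| then 1 else 0 := by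
  by_cases h : ∃ i, ε < |r i|
  · obtain ⟨i, hi⟩ := h
    have hprod : 0 ≤ ∏ i, (1 + r i) := prod_nonneg fun i _ => by linarith [hr i]
    have hone : (1 : ℝ) ≤ ∑ j, if ε < |r j| then 1 else 0 :=
      (if_pos hi).symm.le.trans
        (single_le_sum (f := fun j => if ε < |r j| then (1 : ℝ) else 0)
          (fun j _ => by positivity) (mem_univ i))
    nlinarith
  · push Not at h
    have hbernoulli : 1 - Fintype.card ι * ε ≤ ∏ i, (1 + r i) :=
      calc 1 - Fintype.card ι * ε ≤ (1 - ε) ^ Fintype.card ι := by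
            simpa [sub_eq_add_neg] using one_add_mul_le_pow (by linarith : (-2 : ℝ) ≤ -ε) _
        _ = ∏ _i, (1 - ε) := by rw [prod_const, card_univ]
        _ ≤ ∏ i, (1 + r i) :=
            prod_le_prod (fun _ _ => by linarith) fun i _ => by linarith [(abs_le.mp (h i)).1]
    simp only [(h _).not_gt, if_false, sum_const_zero, add_zero]
    linarith

lemma sum_one_sub_prod_one_add_le {α ι : Type*} [Fintype ι] (A : Finset α) {r : α → ι → ℝ}
    {ε : ℝ} (hr : ∀ a ∈ A, ∀ i, -1 ≤ r a i) (hε₀ : 0 ≤ ε) (hε₁ : ε ≤ 1)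
    (hbad : ∀ i, (#{a ∈ A | ε < |r a i|} : ℝ) ≤ #A * ε) :
    ∑ a ∈ A, (1 - ∏ i, (1 + r a i)) ≤ 2 * Fintype.card ι * ε * #A :=
  calc ∑ a ∈ A, (1 - ∏ i, (1 + r a i))
      ≤ ∑ a ∈ A, (Fintype.card ι * ε + ∑ i, if ε < |r a i| then 1 else 0) :=
        sum_le_sum fun a ha => one_sub_prod_one_add_le (hr a ha) hε₀ hε₁
    _ = #A * (Fintype.card ι * ε) + ∑ i, (#{a ∈ A | ε < |r a i|} : ℝ) := by
        rw [sum_add_distrib, sum_const, nsmul_eq_mul, sum_comm]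
        simp only [sum_boole]
    _ ≤ #A * (Fintype.card ι * ε) + ∑ _i : ι, #A * ε := by gcongr with i; exact hbad i
    _ = 2 * Fintype.card ι * ε * #A := by rw [sum_const, card_univ, nsmul_eq_mul]; ring

lemma prod_sub_average_prod_mul_le {α ι : Type*} [Fintype ι] {A : Finset α} (hA : A.Nonempty)
    {u : ι → ℝ} (hu : ∀ i, 0 ≤ u i) {r : α → ι → ℝ} {ε : ℝ} (hr : ∀ a ∈ A, ∀ i, -1 ≤ r a i)
    (hε₀ : 0 ≤ ε) (hε₁ : ε ≤ 1) (hbad : ∀ i, (#{a ∈ A | ε < |r a i|} : ℝ) ≤ #A * ε) :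
    ∏ i, u i - (#A : ℝ)⁻¹ * ∑ a ∈ A, ∏ i, u i * (1 + r a i) ≤
      2 * Fintype.card ι * ε * ∏ i, u i := by
  have hA₀ : (0 : ℝ) < #A := by exact_mod_cast hA.card_pos
  have hu₀ : 0 ≤ ∏ i, u i := prod_nonneg fun i _ => hu i
  have hfactor : ∏ i, u i - (#A : ℝ)⁻¹ * ∑ a ∈ A, ∏ i, u i * (1 + r a i) =
      (#A : ℝ)⁻¹ * (∏ i, u i) * ∑ a ∈ A, (1 - ∏ i, (1 + r a i)) := by
    simp only [prod_mul_distrib, ← mul_sum, sum_sub_distrib, sum_const, nsmul_eq_mul, mul_one]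
    field_simp
  calc _ = (#A : ℝ)⁻¹ * (∏ i, u i) * ∑ a ∈ A, (1 - ∏ i, (1 + r a i)) := hfactor
    _ ≤ (#A : ℝ)⁻¹ * (∏ i, u i) * (2 * Fintype.card ι * ε * #A) := by
        gcongr
        exact sum_one_sub_prod_one_add_le A hr hε₀ hε₁ hbad
    _ = 2 * Fintype.card ι * ε * ∏ i, u i := by field_simp

lemma inv_rpow_one_third_pow_three_mul {t : ℝ} (ht : 0 < t) :
    (t ^ ((1 : ℝ) / 3))⁻¹ ^ 3 * t = 1 := by
  rw [inv_pow, ← Real.rpow_natCast, ← Real.rpow_mul ht.le]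
  norm_num [inv_mul_cancel₀ ht.ne']

lemma nonempty_filter_ne_zero_paulis {n : ℕ} (hn : 0 < n) :
    ({a | a ≠ fun _ => 0} : Finset (Fin n → Fin 4)).Nonempty :=
  ⟨fun _ => 1, mem_filter.mpr ⟨mem_univ _, Function.ne_iff.mpr ⟨⟨0, hn⟩, by decide⟩⟩⟩

lemma prod_sub_average_pauli_le {n N : ℕ} (hn : 0 < n) {u : Fin N → ℝ} (hu : ∀ i, 0 ≤ u i)
    {φ : Fin N → (Fin n → Fin 2) → ℂ} (hφ : ∀ i, ∑ x, ‖φ i x‖ ^ 2 = 1) :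
    ∏ i, u i - ((4 : ℝ) ^ n - 1)⁻¹ * ∑ a ∈ ({a | a ≠ fun _ => 0} : Finset (Fin n → Fin 4)),
      ∏ i, u i * (1 + (expval (φ i) (nPauli a)).re) ≤
        2 * N / ((2 : ℝ) ^ n + 1) ^ ((1 : ℝ) / 3) * ∏ i, u i := by
  have ht : (1 : ℝ) ≤ 2 ^ n + 1 := by linarith [pow_nonneg (zero_le_two (α := ℝ)) n]
  have hA := card_filter_ne_zero_paulis n
  rw [← hA, div_eq_mul_inv]
  simpa only [Fintype.card_fin] using prod_sub_average_prod_mul_le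
    (nonempty_filter_ne_zero_paulis hn) hu (r := fun a i => (expval (φ i) (nPauli a)).re)
    (fun a _ i => neg_one_le_re_expval_nPauli (hφ i) a) (by positivity)
    (inv_le_one_of_one_le₀ (Real.one_le_rpow ht (by norm_num))) fun i => hA ▸
      card_filter_lt_abs_re_expval_le (hφ i) (by positivity)
        (inv_rpow_one_third_pow_three_mul (by positivity))

lemma sum_prod_mul_one_add_re_expval_eq_one {n N : ℕ} {O : Type*} [Fintype O]
    (w : Fin N → (Fin N → O) → O → ℝ) (ψ : Fin N → (Fin N → O) → O → (Fin n → Fin 2) → ℂ)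
    (hO : Nonempty (Fin N → O)) (hw1 : ∀ i o, ∑ j, w i o j = 1)
    (hPOVM : ∀ i o, ∑ j, ((w i o j : ℂ) * 2 ^ n) •
        vecMulVec (ψ i o j) (fun x => (starRingEnd ℂ) (ψ i o j x)) = 1)
    (hadapt_w : ∀ i o o', (∀ j : Fin N, j < i → o j = o' j) → w i o = w i o')
    (hadapt_ψ : ∀ i o o', (∀ j : Fin N, j < i → o j = o' j) → ψ i o = ψ i o')
    {a : Fin n → Fin 4} (ha : a ≠ fun _ => 0) :
    ∑ o, ∏ i, w i o (o i) * (1 + (expval (ψ i o (o i)) (nPauli a)).re) = 1 := by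
  refine sum_prod_eq_one_of_adapted (fun i o j => w i o j * (1 + (expval (ψ i o j) (nPauli a)).re))
    hO (fun i o => ?_) fun i o o' h => by rw [hadapt_w i o o' h, hadapt_ψ i o o' h]
  simp only [mul_add, mul_one, sum_add_distrib, hw1,
    sum_mul_re_expval_nPauli_eq_zero (hPOVM i o) ha, add_zero]

/-- Hypothesis-testing bound for adaptive single-copy rank-one POVM measurements:
`p₁` is the outcome distribution under the maximally mixed state `I/2ⁿ`,
`p₂(o) = (4ⁿ−1)⁻¹ Σ_a ∏ᵢ wᵢ(o)(oᵢ)(1 + ⟨ψᵢ|P_a|ψᵢ⟩)` the distribution under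
`ρ_a = (I + P_a)/2ⁿ` for a uniformly random non-identity Pauli `P_a`.
At step `i`, the POVM `{wᵢ 2ⁿ |ψᵢ⟩⟨ψᵢ|}` may depend adaptively on the past outcomes.
Then `TV(p₁, p₂) ≤ 2N/(2ⁿ + 1)^{1/3}`. -/
theorem adaptive_TV_bound {n N : ℕ} (hn : 0 < n) {O : Type*} [Fintype O]
    (w : Fin N → (Fin N → O) → O → ℝ)
    (ψ : Fin N → (Fin N → O) → O → (Fin n → Fin 2) → ℂ)
    (hw0 : ∀ i o j, 0 ≤ w i o j)
    (hw1 : ∀ i o, ∑ j, w i o j = 1)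
    (hψ : ∀ i o j, ∑ x, ‖ψ i o j x‖ ^ 2 = 1)
    (hPOVM : ∀ i o, ∑ j, ((w i o j : ℂ) * 2 ^ n) •
        Matrix.vecMulVec (ψ i o j) (fun x => (starRingEnd ℂ) (ψ i o j x)) = 1)
    (hadapt_w : ∀ i o o', (∀ j : Fin N, j < i → o j = o' j) → w i o = w i o')
    (hadapt_ψ : ∀ i o o', (∀ j : Fin N, j < i → o j = o' j) → ψ i o = ψ i o') :
    (1 / 2 : ℝ) * ∑ o : Fin N → O,
        |(∏ i, w i o (o i)) -
          ((4 : ℝ) ^ n - 1)⁻¹ *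
            ∑ a ∈ Finset.univ.filter (fun a : Fin n → Fin 4 => a ≠ fun _ => 0),
              ∏ i, w i o (o i) * (1 + (expval (ψ i o (o i)) (nPauli a)).re)| ≤
      2 * N / ((2 : ℝ) ^ n + 1) ^ ((1 : ℝ) / 3) := by
  rcases isEmpty_or_nonempty (Fin N → O) with hO | hO
  · rw [univ_eq_empty, sum_empty, mul_zero]
    positivity
  have hp₁ : ∑ o, ∏ i, w i o (o i) = 1 := sum_prod_eq_one_of_adapted w hO hw1 hadapt_w
  have hK : ((4 : ℝ) ^ n - 1) ≠ 0 := by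
    rw [← card_filter_ne_zero_paulis]
    exact_mod_cast (nonempty_filter_ne_zero_paulis hn).card_pos.ne'
  have hbalance : ∑ o : Fin N → O, ((∏ i, w i o (o i)) - ((4 : ℝ) ^ n - 1)⁻¹ *
      ∑ a ∈ ({a | a ≠ fun _ => 0} : Finset (Fin n → Fin 4)),
        ∏ i, w i o (o i) * (1 + (expval (ψ i o (o i)) (nPauli a)).re)) = 0 := by
    rw [sum_sub_distrib, hp₁, ← mul_sum, sum_comm, sum_congr rfl fun a ha =>
      sum_prod_mul_one_add_re_expval_eq_one w ψ hO hw1 hPOVM hadapt_w hadapt_ψ (mem_filter.mp ha).2,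
      sum_const, nsmul_one, card_filter_ne_zero_paulis, inv_mul_cancel₀ hK, sub_self]
  rw [half_mul_sum_abs_eq_sum_posPart hbalance]
  calc _ ≤ ∑ o : Fin N → O, 2 * N / ((2 : ℝ) ^ n + 1) ^ ((1 : ℝ) / 3) * ∏ i, w i o (o i) :=
        sum_le_sum fun o _ => sup_le (prod_sub_average_pauli_le hn (fun i => hw0 i o (o i))
          fun i => hψ i o (o i)) (mul_nonneg (by positivity) (prod_nonneg fun i _ => hw0 i o (o i)))
    _ = _ := by rw [← mul_sum, hp₁, mul_one]
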